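/- Let W₁, W₂, T be symmetric positive definite real n×n matrices with ‖T^{-1/2} W₁ T^{-1/2}‖ ≤ 1 or ‖T^{-1/2} W₂ T^{-1/2}‖ ≤ 1. Then every eigenvalue λ of B = (W₂ - iT)^{-1} W₁ (W₁ + iT)^{-1} W₂ satisfies |λ| ≤ 1/√2. -/

import Mathlib

open scoped Matrix.Norms.L2Operator

def Matrix.cplx {n : ℕ} (A : Matrix (Fin n) (Fin n) ℝ) : Matrix (Fin n) (Fin n) ℂ :=
  A.map Complex.ofReal

/-- `Ŵ = T^{-1/2} W T^{-1/2}` -/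
noncomputable def Matrix.hatW {n : ℕ} (T : Matrix (Fin n) (Fin n) ℝ) (hT : T.PosDef)
    (W : Matrix (Fin n) (Fin n) ℝ) : Matrix (Fin n) (Fin n) ℝ :=
  (hT.posSemidef.1.eigenvectorUnitary.1 *
      Matrix.diagonal ((↑) ∘ (√·) ∘ hT.posSemidef.1.eigenvalues) *
      (star hT.posSemidef.1.eigenvectorUnitary : Matrix (Fin n) (Fin n) ℝ))⁻¹ * W *
    (hT.posSemidef.1.eigenvectorUnitary.1 *
      Matrix.diagonal ((↑) ∘ (√·) ∘ hT.posSemidef.1.eigenvalues) *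
      (star hT.posSemidef.1.eigenvectorUnitary : Matrix (Fin n) (Fin n) ℝ))⁻¹

/-!
Write `T = S²` with `S = T^{1/2}` and `Aⱼ = S⁻¹ Wⱼ S⁻¹` (Hermitian). Then `W₁ + iT = S (A₁ + i) S`
and `W₂ - iT = S (A₂ - i) S`, so `B` is similar to `(A₁ (A₁ + i)⁻¹) (A₂ (A₂ - i)⁻¹)`, and every
eigenvalue is bounded by the product of the operator norms of these two factors. For Hermitian `A`
and imaginary `ε`, `‖(A + ε) x‖² = ‖A x‖² + |ε|² ‖x‖²`; hence `‖A (A ± i)⁻¹‖ ≤ 1` always, and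
`‖A (A ± i)⁻¹‖ ≤ 1/√2` when `‖A‖ ≤ 1`.
-/

lemma EuclideanSpace.norm_sq_eq_norm_re_sq_add_norm_im_sq {n : Type*} [Fintype n]
    (v : EuclideanSpace ℂ n) :
    ‖v‖ ^ 2 = ‖WithLp.toLp 2 (fun i ↦ (v i).re)‖ ^ 2 + ‖WithLp.toLp 2 (fun i ↦ (v i).im)‖ ^ 2 := by
  simp only [EuclideanSpace.norm_sq_eq, ← Finset.sum_add_distrib, Complex.sq_norm,
    Complex.normSq_apply, Real.norm_eq_abs, sq_abs]
  simp [sq]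

namespace Matrix

section ComplexificationNorm

variable {m n : Type*} [Fintype n]

lemma re_map_ofReal_mulVec (A : Matrix m n ℝ) (v : n → ℂ) (i : m) :
    ((A.map ((↑) : ℝ → ℂ) *ᵥ v) i).re = (A *ᵥ fun j ↦ (v j).re) i := by
  simp [mulVec, dotProduct, Complex.re_sum]

lemma im_map_ofReal_mulVec (A : Matrix m n ℝ) (v : n → ℂ) (i : m) :
    ((A.map ((↑) : ℝ → ℂ) *ᵥ v) i).im = (A *ᵥ fun j ↦ (v j).im) i := by
  simp [mulVec, dotProduct, Complex.im_sum]

lemma l2_opNorm_map_ofReal_le [Fintype m] [DecidableEq n] (A : Matrix m n ℝ) :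
    ‖A.map ((↑) : ℝ → ℂ)‖ ≤ ‖A‖ := by
  rw [l2_opNorm_def]
  refine ContinuousLinearMap.opNorm_le_bound _ (norm_nonneg A) fun v ↦ ?_
  change ‖WithLp.toLp 2 (A.map ((↑) : ℝ → ℂ) *ᵥ v)‖ ≤ ‖A‖ * ‖v‖
  have hre := A.l2_opNorm_mulVec (WithLp.toLp 2 fun j ↦ (v j).re)
  have him := A.l2_opNorm_mulVec (WithLp.toLp 2 fun j ↦ (v j).im)
  rw [← pow_le_pow_iff_left₀ (norm_nonneg _) (by positivity) two_ne_zero, mul_pow,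
    EuclideanSpace.norm_sq_eq_norm_re_sq_add_norm_im_sq v,
    EuclideanSpace.norm_sq_eq_norm_re_sq_add_norm_im_sq, mul_add]
  simp only [re_map_ofReal_mulVec, im_map_ofReal_mulVec]
  exact add_le_add (by rw [← mul_pow]; gcongr; exact hre) (by rw [← mul_pow]; gcongr; exact him)

end ComplexificationNorm

variable {m : Type*} [Fintype m] [DecidableEq m]

lemma l2_opNorm_one_le {𝕜 : Type*} [RCLike 𝕜] : ‖(1 : Matrix m m 𝕜)‖ ≤ 1 := by
  rw [cstar_norm_def, map_one]
  exact ContinuousLinearMap.norm_id_le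

lemma norm_le_l2_opNorm_of_mem_spectrum {𝕜 : Type*} [RCLike 𝕜] {A : Matrix m m 𝕜} {k : 𝕜}
    (hk : k ∈ spectrum 𝕜 A) : ‖k‖ ≤ ‖A‖ :=
  (spectrum.norm_le_norm_mul_of_mem hk).trans
    (mul_le_of_le_one_right (norm_nonneg A) l2_opNorm_one_le)

lemma spectrum_nonsing_inv_mul_mul {R : Type*} [CommRing R] {Q : Matrix m m R} (hQ : IsUnit Q.det)
    (M : Matrix m m R) : spectrum R (Q⁻¹ * M * Q) = spectrum R M := by
  have hQu : IsUnit Q := (isUnit_iff_isUnit_det Q).mpr hQ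
  rw [← hQu.unit_spec, ← coe_units_inv, spectrum.units_conjugate']

lemma nonsing_inv_mul_mul_nonsing_inv_mul_eq_conj {R : Type*} [CommRing R]
    {P X₁ X₂ A₁ A₂ : Matrix m m R} (hP : IsUnit P.det) (hX₂ : IsUnit X₂.det) :
    (P * X₂ * P)⁻¹ * (P * A₁ * P) * (P * X₁ * P)⁻¹ * (P * A₂ * P) =
      (X₂ * P)⁻¹ * (A₁ * X₁⁻¹ * (A₂ * X₂⁻¹)) * (X₂ * P) := by
  simp only [mul_inv_rev, Matrix.mul_assoc, nonsing_inv_mul_cancel_left (h := hP),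
    mul_nonsing_inv_cancel_left (h := hP), nonsing_inv_mul_cancel_left (h := hX₂)]

namespace IsHermitian

variable {A : Matrix m m ℂ} (hA : A.IsHermitian) {ε : ℂ} (hε : ε.re = 0)
include hA hε

lemma norm_toEuclideanCLM_add_smul_one_sq (x : EuclideanSpace ℂ m) :
    ‖toEuclideanCLM (𝕜 := ℂ) (A + ε • 1) x‖ ^ 2 =
      ‖toEuclideanCLM (𝕜 := ℂ) A x‖ ^ 2 + ‖ε‖ ^ 2 * ‖x‖ ^ 2 := by
  have hsymm : (toEuclideanCLM (𝕜 := ℂ) A : EuclideanSpace ℂ m →ₗ[ℂ] _).IsSymmetric :=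
    (hA.isSelfAdjoint.map (toEuclideanCLM (𝕜 := ℂ))).isSymmetric
  have hsplit : toEuclideanCLM (𝕜 := ℂ) (A + ε • 1) x = toEuclideanCLM (𝕜 := ℂ) A x + ε • x := by
    simp
  rw [hsplit, norm_add_sq (𝕜 := ℂ), inner_smul_right, norm_smul]
  -- the cross term `2 Re (ε ⟪A x, x⟫)` vanishes: `⟪A x, x⟫` is real and `ε` is imaginary
  simp [← hsymm.coe_reApplyInnerSelf_apply x, hε]
  ring

lemma isUnit_add_smul_one (hε0 : ε ≠ 0) : IsUnit (A + ε • 1) := by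
  have hnotMem : -ε ∉ spectrum ℂ A := fun h ↦ hε0 <| by
    simpa [hε] using hA.isSelfAdjoint.mem_spectrum_eq_re h
  simpa [Algebra.algebraMap_eq_smul_one, sub_eq_add_neg, add_comm] using
    (spectrum.notMem_iff.mp hnotMem).neg

lemma norm_mul_inv_add_smul_one_le (hε0 : ε ≠ 0) {c : ℝ} (hc : 0 ≤ c)
    (h : ∀ x, ‖toEuclideanCLM (𝕜 := ℂ) A x‖ ^ 2 ≤
      c ^ 2 * (‖toEuclideanCLM (𝕜 := ℂ) A x‖ ^ 2 + ‖ε‖ ^ 2 * ‖x‖ ^ 2)) :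
    ‖A * (A + ε • 1)⁻¹‖ ≤ c := by
  have hX : (A + ε • 1) * (A + ε • 1)⁻¹ = 1 :=
    mul_nonsing_inv _ ((isUnit_iff_isUnit_det _).mp (hA.isUnit_add_smul_one hε hε0))
  rw [cstar_norm_def]
  refine ContinuousLinearMap.opNorm_le_bound _ hc fun z ↦ ?_
  set x := toEuclideanCLM (𝕜 := ℂ) (A + ε • 1)⁻¹ z
  have hz : toEuclideanCLM (𝕜 := ℂ) (A + ε • 1) x = z := by
    simp only [x, ← ContinuousLinearMap.comp_apply, ← ContinuousLinearMap.mul_def, ← map_mul, hX,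
      map_one]
    rfl
  have hAx : toEuclideanCLM (𝕜 := ℂ) (A * (A + ε • 1)⁻¹) z = toEuclideanCLM (𝕜 := ℂ) A x := by
    rw [map_mul]; rfl
  rw [hAx, ← hz, ← pow_le_pow_iff_left₀ (norm_nonneg _) (by positivity) two_ne_zero, mul_pow,
    hA.norm_toEuclideanCLM_add_smul_one_sq hε]
  exact h x

lemma norm_mul_inv_add_smul_one_le_one (hε0 : ε ≠ 0) : ‖A * (A + ε • 1)⁻¹‖ ≤ 1 :=
  hA.norm_mul_inv_add_smul_one_le hε hε0 zero_le_one fun x ↦ by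
    nlinarith [mul_nonneg (sq_nonneg ‖ε‖) (sq_nonneg ‖x‖)]

lemma norm_mul_inv_add_smul_one_le_inv_sqrt_two (hε0 : ε ≠ 0) (hAε : ‖A‖ ≤ ‖ε‖) :
    ‖A * (A + ε • 1)⁻¹‖ ≤ 1 / √2 := by
  refine hA.norm_mul_inv_add_smul_one_le hε hε0 (by positivity) fun x ↦ ?_
  have hAx : ‖toEuclideanCLM (𝕜 := ℂ) A x‖ ≤ ‖ε‖ * ‖x‖ :=
    ((toEuclideanCLM (𝕜 := ℂ) A).le_opNorm x).trans
      (mul_le_mul_of_nonneg_right hAε (norm_nonneg x))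
  rw [div_pow, one_pow, Real.sq_sqrt zero_le_two]
  nlinarith [norm_nonneg (toEuclideanCLM (𝕜 := ℂ) A x), mul_nonneg (norm_nonneg ε) (norm_nonneg x)]

end IsHermitian

open Complex in
theorem norm_le_inv_sqrt_two_of_mem_spectrum_resolvent_mul {W₁ W₂ T P A₁ A₂ : Matrix m m ℂ}
    (hP : IsUnit P.det) (hA₁ : A₁.IsHermitian) (hA₂ : A₂.IsHermitian) (hT : T = P * P)
    (hW₁ : W₁ = P * A₁ * P) (hW₂ : W₂ = P * A₂ * P) (hsmall : ‖A₁‖ ≤ 1 ∨ ‖A₂‖ ≤ 1) {lam : ℂ}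
    (hlam : lam ∈ spectrum ℂ ((W₂ - I • T)⁻¹ * W₁ * (W₁ + I • T)⁻¹ * W₂)) :
    ‖lam‖ ≤ 1 / √2 := by
  subst hT hW₁ hW₂
  have hfactor (A : Matrix m m ℂ) (ε : ℂ) : P * A * P + ε • (P * P) = P * (A + ε • 1) * P := by
    simp only [Matrix.mul_add, Matrix.add_mul, Matrix.mul_smul, Matrix.smul_mul, Matrix.mul_one]
  have hX₂ : IsUnit (A₂ + (-I) • 1).det :=
    (isUnit_iff_isUnit_det _).mp (hA₂.isUnit_add_smul_one (by simp) (by simp))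
  rw [sub_eq_add_neg, ← neg_smul, hfactor, hfactor,
    nonsing_inv_mul_mul_nonsing_inv_mul_eq_conj hP hX₂,
    spectrum_nonsing_inv_mul_mul (by rw [det_mul]; exact hX₂.mul hP)] at hlam
  refine (norm_le_l2_opNorm_of_mem_spectrum hlam).trans ((l2_opNorm_mul _ _).trans ?_)
  have h₁ := hA₁.norm_mul_inv_add_smul_one_le_one (ε := I) (by simp) I_ne_zero
  have h₂ := hA₂.norm_mul_inv_add_smul_one_le_one (ε := -I) (by simp) (neg_ne_zero.mpr I_ne_zero)
  rcases hsmall with hsmall | hsmall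
  · have h₁' := hA₁.norm_mul_inv_add_smul_one_le_inv_sqrt_two (ε := I) (by simp) I_ne_zero
      (by simpa using hsmall)
    exact (mul_le_mul h₁' h₂ (norm_nonneg _) (by positivity)).trans_eq (mul_one _)
  · have h₂' := hA₂.norm_mul_inv_add_smul_one_le_inv_sqrt_two (ε := -I) (by simp)
      (neg_ne_zero.mpr I_ne_zero) (by simpa using hsmall)
    exact (mul_le_mul h₁ h₂' (norm_nonneg _) zero_le_one).trans_eq (one_mul _)

section SpectralSqrt

open scoped ComplexOrder

variable {𝕜 : Type*} [RCLike 𝕜]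

noncomputable def PosSemidef.spectralSqrt {T : Matrix m m 𝕜} (hT : T.PosSemidef) : Matrix m m 𝕜 :=
  hT.1.eigenvectorUnitary.1 * diagonal ((↑) ∘ (√·) ∘ hT.1.eigenvalues) *
    (star hT.1.eigenvectorUnitary : Matrix m m 𝕜)

namespace PosSemidef

variable {T : Matrix m m 𝕜} (hT : T.PosSemidef)

lemma spectralSqrt_mul_self : hT.spectralSqrt * hT.spectralSqrt = T := by
  have hD : diagonal ((↑) ∘ (√·) ∘ hT.1.eigenvalues : m → 𝕜) *
      diagonal ((↑) ∘ (√·) ∘ hT.1.eigenvalues) = diagonal ((↑) ∘ hT.1.eigenvalues) := by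
    rw [diagonal_mul_diagonal]
    congr 1
    funext i
    simp only [Function.comp_apply, ← RCLike.ofReal_mul,
      Real.mul_self_sqrt (hT.eigenvalues_nonneg i)]
  conv_rhs => rw [hT.1.spectral_theorem, Unitary.conjStarAlgAut_apply, ← hD]
  simp only [spectralSqrt, Matrix.mul_assoc]
  rw [← Matrix.mul_assoc (star _ : Matrix m m 𝕜),
    Unitary.star_mul_self_of_mem hT.1.eigenvectorUnitary.2, Matrix.one_mul]

lemma isHermitian_spectralSqrt : hT.spectralSqrt.IsHermitian :=
  isHermitian_mul_mul_conjTranspose _ (isHermitian_diagonal_of_self_adjoint _ (by ext i; simp))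

end PosSemidef

lemma PosDef.isUnit_det_spectralSqrt {T : Matrix m m 𝕜} (hT : T.PosDef) :
    IsUnit hT.posSemidef.spectralSqrt.det := by
  have h := hT.isUnit.map detMonoidHom
  rw [← hT.posSemidef.spectralSqrt_mul_self, map_mul] at h
  exact isUnit_of_mul_isUnit_left h

end SpectralSqrt

variable {n : ℕ}

lemma cplx_mul (A B : Matrix (Fin n) (Fin n) ℝ) : (A * B).cplx = A.cplx * B.cplx :=
  map_mul (f := Complex.ofRealHom.mapMatrix) A B

lemma IsHermitian.cplx {A : Matrix (Fin n) (Fin n) ℝ} (hA : A.IsHermitian) : A.cplx.IsHermitian :=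
  hA.map _ fun _ ↦ by simp

lemma isUnit_det_cplx {A : Matrix (Fin n) (Fin n) ℝ} (hA : IsUnit A.det) : IsUnit A.cplx.det := by
  have h := hA.map Complex.ofRealHom
  rwa [RingHom.map_det] at h

lemma hatW_def (T W : Matrix (Fin n) (Fin n) ℝ) (hT : T.PosDef) :
    T.hatW hT W = hT.posSemidef.spectralSqrt⁻¹ * W * hT.posSemidef.spectralSqrt⁻¹ := rfl

lemma PosDef.spectralSqrt_mul_hatW_mul {T : Matrix (Fin n) (Fin n) ℝ} (hT : T.PosDef)
    (W : Matrix (Fin n) (Fin n) ℝ) :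
    hT.posSemidef.spectralSqrt * T.hatW hT W * hT.posSemidef.spectralSqrt = W := by
  have hS := hT.isUnit_det_spectralSqrt
  simp only [hatW_def, Matrix.mul_assoc, mul_nonsing_inv_cancel_left (h := hS),
    nonsing_inv_mul _ hS, Matrix.mul_one]

lemma IsHermitian.hatW {T W : Matrix (Fin n) (Fin n) ℝ} (hT : T.PosDef) (hW : W.IsHermitian) :
    (T.hatW hT W).IsHermitian := by
  have h := isHermitian_conjTranspose_mul_mul hT.posSemidef.spectralSqrt⁻¹ hW
  rwa [hT.posSemidef.isHermitian_spectralSqrt.inv.eq] at h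

end Matrix

/-- if `‖Ŵ₁‖ ≤ 1` or `‖Ŵ₂‖ ≤ 1`, then every eigenvalue of
`B = (W₂ - iT)⁻¹ W₁ (W₁ + iT)⁻¹ W₂` has modulus at most `1/√2`. -/
theorem stmt_5 {n : ℕ} (W₁ W₂ T : Matrix (Fin n) (Fin n) ℝ)
    (hW₁ : W₁.PosDef) (hW₂ : W₂.PosDef) (hT : T.PosDef)
    (hsmall : ‖T.hatW hT W₁‖ ≤ 1 ∨ ‖T.hatW hT W₂‖ ≤ 1) :
    ∀ lam ∈ spectrum ℂ
        ((W₂.cplx - Complex.I • T.cplx)⁻¹ * W₁.cplx *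
          (W₁.cplx + Complex.I • T.cplx)⁻¹ * W₂.cplx),
      ‖lam‖ ≤ 1 / Real.sqrt 2 := by
  intro lam hlam
  have hfactor (W : Matrix (Fin n) (Fin n) ℝ) : W.cplx =
      hT.posSemidef.spectralSqrt.cplx * (T.hatW hT W).cplx * hT.posSemidef.spectralSqrt.cplx := by
    rw [← Matrix.cplx_mul, ← Matrix.cplx_mul, hT.spectralSqrt_mul_hatW_mul]
  refine Matrix.norm_le_inv_sqrt_two_of_mem_spectrum_resolvent_mul
    (Matrix.isUnit_det_cplx hT.isUnit_det_spectralSqrt) (hW₁.1.hatW hT).cplx (hW₂.1.hatW hT).cplx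
    (by rw [← Matrix.cplx_mul, hT.posSemidef.spectralSqrt_mul_self]) (hfactor W₁) (hfactor W₂)
    ?_ hlam
  exact hsmall.imp (Matrix.l2_opNorm_map_ofReal_le _).trans (Matrix.l2_opNorm_map_ofReal_le _).trans
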